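/- arXiv:1307.0052 — 2 statements merged into one kernel-verified Lean document; each statement's English description precedes it below -/
import Mathlib

section
/- Suppose the set { min_{1≤i≤N} f_i(X)/(c_i g_i(X)) : X ∈ S } is bounded above. Let λ ∈ ℝ and X ∈ S satisfy min_{1≤i≤N} (f_i(X) − λ c_i g_i(X)) > 0, and set λ⁺ = min_{1≤i≤N} f_i(X)/(c_i g_i(X)). Then λ < λ⁺ ≤ λ*; i.e., each iteration of the Dinkelbach-type algorithm strictly increases the parameter while never exceeding the optimal max-min value. -/
/-- The minimum of a finite family of reals indexed by `Fin N`, `N > 0`. -/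
noncomputable def minOver {N : ℕ} (hN : 0 < N) (v : Fin N → ℝ) : ℝ :=
  Finset.univ.inf' (Finset.univ_nonempty_iff.mpr (Fin.pos_iff_nonempty.mp hN)) v

section minOver

variable {N : ℕ} (hN : 0 < N)

theorem lt_minOver_iff {v : Fin N → ℝ} {t : ℝ} : t < minOver hN v ↔ ∀ i, t < v i := by
  simp [minOver, Finset.lt_inf'_iff]

theorem lt_minOver_div_of_pos_minOver_sub {a b : Fin N → ℝ} (hb : ∀ i, 0 < b i) {t : ℝ}
    (h : 0 < minOver hN fun i => a i - t * b i) : t < minOver hN fun i => a i / b i := by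
  rw [lt_minOver_iff] at h ⊢
  intro i
  rw [lt_div_iff₀ (hb i)]
  linarith [h i]

end minOver

theorem stmt8_general {S : Type*} {N : ℕ} (hN : 0 < N)
    (f g : Fin N → S → ℝ) (hg : ∀ i X, 0 < g i X)
    (c : Fin N → ℝ) (hc : ∀ i, 0 < c i)
    (hbdd : BddAbove (Set.range fun X : S => minOver hN fun i => f i X / (c i * g i X)))
    (lam : ℝ) (X : S)
    (hpos : 0 < minOver hN fun i => f i X - lam * c i * g i X) :
    lam < minOver hN (fun i => f i X / (c i * g i X)) ∧
      minOver hN (fun i => f i X / (c i * g i X)) ≤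
        sSup (Set.range fun Y : S => minOver hN fun i => f i Y / (c i * g i Y)) := by
  refine ⟨?_, le_csSup hbdd (Set.mem_range_self X)⟩
  simp only [mul_assoc] at hpos
  exact lt_minOver_div_of_pos_minOver_sub hN (fun i => mul_pos (hc i) (hg i X)) hpos

/-- Each iteration of the Dinkelbach-type algorithm strictly increases the parameter while
never exceeding the optimal max-min value: if `min_i (f_i(X) − λ c_i g_i(X)) > 0` and
`λ⁺ = min_i f_i(X)/(c_i g_i(X))`, then `λ < λ⁺ ≤ λ*`. -/
theorem stmt8 {S : Type*} [Nonempty S] {N : ℕ} (hN : 0 < N)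
    (f g : Fin N → S → ℝ) (hg : ∀ i X, 0 < g i X)
    (c : Fin N → ℝ) (hc : ∀ i, 0 < c i)
    (hbdd : BddAbove (Set.range fun X : S => minOver hN fun i => f i X / (c i * g i X)))
    (lam : ℝ) (X : S)
    (hpos : 0 < minOver hN fun i => f i X - lam * c i * g i X) :
    lam < minOver hN (fun i => f i X / (c i * g i X)) ∧
      minOver hN (fun i => f i X / (c i * g i X)) ≤
        sSup (Set.range fun Y : S => minOver hN fun i => f i Y / (c i * g i Y)) :=
  stmt8_general hN f g hg c hc hbdd lam X hpos
end

section
/- Suppose the set { min_{1≤i≤N} f_i(X)/(c_i g_i(X)) : X ∈ S } is bounded above. Let X' ∈ S, set λ' = min_{1≤i≤N} f_i(X')/(c_i g_i(X')), and suppose min_{1≤i≤N} (f_i(X) − λ' c_i g_i(X)) ≤ 0 for every X ∈ S (i.e. F(λ') ≤ 0, the termination condition of the Dinkelbach-type algorithm). Then λ' = λ* and X' attains the supremum defining λ*; i.e., upon termination the algorithm outputs a global maximizer of the max-min fractional program. -/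
/-! If `min_i (f_i(X) − λ' c_i g_i(X)) ≤ 0`, some index `i` has `f_i(X) ≤ λ' c_i g_i(X)`, and
dividing by `c_i g_i(X) > 0` gives `min_i f_i(X)/(c_i g_i(X)) ≤ λ'`. So `λ'`, a value of the
objective attained at `X'`, bounds every value: it is the greatest one, hence the supremum. -/

section minOver

variable {N : ℕ} (hN : 0 < N)

theorem minOver_le (v : Fin N → ℝ) (i : Fin N) : minOver hN v ≤ v i :=
  Finset.inf'_le _ (Finset.mem_univ i)

theorem minOver_le_iff {v : Fin N → ℝ} {a : ℝ} : minOver hN v ≤ a ↔ ∃ i, v i ≤ a := by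
  simp [minOver, Finset.inf'_le_iff]

theorem minOver_div_le_of_minOver_sub_mul_nonpos {a w : Fin N → ℝ} (hw : ∀ i, 0 < w i)
    {lam : ℝ} (h : minOver hN (fun i => a i - lam * w i) ≤ 0) :
    minOver hN (fun i => a i / w i) ≤ lam := by
  obtain ⟨i, hi⟩ := (minOver_le_iff hN).mp h
  calc minOver hN (fun i => a i / w i) ≤ a i / w i := minOver_le hN _ i
    _ ≤ lam := (div_le_iff₀ (hw i)).mpr (by linarith)

end minOver

theorem stmt9_general {S : Type*} {N : ℕ} (hN : 0 < N)
    (f g : Fin N → S → ℝ) (hg : ∀ i X, 0 < g i X)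
    (c : Fin N → ℝ) (hc : ∀ i, 0 < c i)
    (X' : S)
    (hterm : ∀ X : S,
      minOver hN (fun i => f i X -
        (minOver hN fun i => f i X' / (c i * g i X')) * c i * g i X) ≤ 0) :
    minOver hN (fun i => f i X' / (c i * g i X')) =
        sSup (Set.range fun X : S => minOver hN fun i => f i X / (c i * g i X)) ∧
      ∀ X : S, minOver hN (fun i => f i X / (c i * g i X)) ≤
        minOver hN (fun i => f i X' / (c i * g i X')) := by
  have hub : ∀ X : S, minOver hN (fun i => f i X / (c i * g i X)) ≤
      minOver hN (fun i => f i X' / (c i * g i X')) := fun X =>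
    minOver_div_le_of_minOver_sub_mul_nonpos hN (fun i => mul_pos (hc i) (hg i X))
      (by simpa only [mul_assoc] using hterm X)
  have hgreatest : IsGreatest (Set.range fun X : S => minOver hN fun i => f i X / (c i * g i X))
      (minOver hN fun i => f i X' / (c i * g i X')) :=
    ⟨⟨X', rfl⟩, by rintro _ ⟨X, rfl⟩; exact hub X⟩
  exact ⟨hgreatest.csSup_eq.symm, hub⟩

/-- Upon termination, the Dinkelbach-type algorithm outputs a global maximizer of the
max-min fractional program: if `λ' = min_i f_i(X')/(c_i g_i(X'))` satisfies
`min_i (f_i(X) − λ' c_i g_i(X)) ≤ 0` for all `X` (i.e. `F(λ') ≤ 0`), then `λ' = λ*` and `X'`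
attains the supremum defining `λ*`. -/
theorem stmt9 {S : Type*} [Nonempty S] {N : ℕ} (hN : 0 < N)
    (f g : Fin N → S → ℝ) (hg : ∀ i X, 0 < g i X)
    (c : Fin N → ℝ) (hc : ∀ i, 0 < c i)
    (hbdd : BddAbove (Set.range fun X : S => minOver hN fun i => f i X / (c i * g i X)))
    (X' : S)
    (hterm : ∀ X : S,
      minOver hN (fun i => f i X -
        (minOver hN fun i => f i X' / (c i * g i X')) * c i * g i X) ≤ 0) :
    minOver hN (fun i => f i X' / (c i * g i X')) =
        sSup (Set.range fun X : S => minOver hN fun i => f i X / (c i * g i X)) ∧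
      ∀ X : S, minOver hN (fun i => f i X / (c i * g i X)) ≤
        minOver hN (fun i => f i X' / (c i * g i X')) :=
  stmt9_general hN f g hg c hc X' hterm
end
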